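/- Let β = e_1 with β^∨ = 2e_1 and s_β x = (−x_1, x_2, …, x_n). Let λ ∈ ℂ^n with ⟨λ, β^∨⟩ = 2λ_1 ≠ 1, and suppose f : ℝ^n → ℂ is continuously differentiable and satisfies D_ξ f(x) = ⟨λ, ξ⟩ f(x) for all ξ ∈ ℝ^n and all regular x, where D is the Cherednik operator associated with (BC_n^+, (k_1,k_2,k_3)). Then the function g(x) := e^{x_1} f(s_β x) + (k_1 / (1 − 2λ_1)) f(x) satisfies D_ξ g(x) = ⟨β + s_β λ, ξ⟩ g(x) for all ξ ∈ ℝ^n and all regular x, where β + s_β λ = (1 − λ_1, λ_2, …, λ_n). -/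

import Mathlib

open scoped BigOperators
open Finset

/-- Sign change of the `i`-th coordinate: the reflection `s_{e_i} = s_{2e_i}`. -/
def negCoord {n : ℕ} (i : Fin n) (x : Fin n → ℝ) : Fin n → ℝ :=
  fun l => if l = i then -x l else x l

/-- Transposition of the coordinates `i` and `j`: the reflection `s_{e_i − e_j}`. -/
def swapCoord {n : ℕ} (i j : Fin n) (x : Fin n → ℝ) : Fin n → ℝ :=
  fun l => if l = i then x j else if l = j then x i else x l

/-- Swap and negate the coordinates `i` and `j`: the reflection `s_{e_i + e_j}`. -/
def swapNegCoord {n : ℕ} (i j : Fin n) (x : Fin n → ℝ) : Fin n → ℝ :=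
  fun l => if l = i then -x j else if l = j then -x i else x l

/-- The Weyl vector `ρ^{BC}(k₁,k₂,k₃)`, with `ρ^{BC} = (1/2)∑ᵢ (k₁+2k₂+2k₃(n−i)) eᵢ`
(1-based `i`). -/
noncomputable def rhoBC {n : ℕ} (k1 k2 k3 : ℝ) : Fin n → ℝ :=
  fun i => (k1 + 2 * k2 + 2 * k3 * ((n : ℝ) - (i : ℕ) - 1)) / 2

/-- Regular points for the root system `BC_n`. -/
def IsRegularBC {n : ℕ} (x : Fin n → ℝ) : Prop :=
  (∀ i, x i ≠ 0) ∧ ∀ i j : Fin n, i < j → x i + x j ≠ 0 ∧ x i - x j ≠ 0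

/-- The Cherednik operator `D_ξ` associated with `(BC_n^+, (k₁,k₂,k₃))`, applied
pointwise: the sum over `BC_n^+` is written out according to the type of root. -/
noncomputable def cherednikBC {n : ℕ} (k1 k2 k3 : ℝ) (ξ : Fin n → ℝ)
    (f : (Fin n → ℝ) → ℂ) (x : Fin n → ℝ) : ℂ :=
  fderiv ℝ f x ξ - ((∑ i, rhoBC k1 k2 k3 i * ξ i : ℝ) : ℂ) * f x
    + ∑ i, ((k1 * ξ i : ℝ) : ℂ) * (f x - f (negCoord i x))
        / (1 - Complex.exp (-((x i : ℝ) : ℂ)))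
    + ∑ i, ((k2 * (2 * ξ i) : ℝ) : ℂ) * (f x - f (negCoord i x))
        / (1 - Complex.exp (-((2 * x i : ℝ) : ℂ)))
    + ∑ i, ∑ j, (if i < j then
        ((k3 * (ξ i - ξ j) : ℝ) : ℂ) * (f x - f (swapCoord i j x))
          / (1 - Complex.exp (-((x i - x j : ℝ) : ℂ)))
        + ((k3 * (ξ i + ξ j) : ℝ) : ℂ) * (f x - f (swapNegCoord i j x))
          / (1 - Complex.exp (-((x i + x j : ℝ) : ℂ)))
      else 0)

section Aux

variable {n : ℕ}

lemma negCoord_self (i : Fin n) (x : Fin n → ℝ) : negCoord i x i = -x i := by simp [negCoord]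

lemma negCoord_ne (i l : Fin n) (x : Fin n → ℝ) (h : l ≠ i) : negCoord i x l = x l := by
  simp [negCoord, h]

lemma negCoord_negCoord (i : Fin n) (x : Fin n → ℝ) : negCoord i (negCoord i x) = x := by
  funext l; simp [negCoord]; split_ifs <;> simp

lemma negCoord_comm (i j : Fin n) (x : Fin n → ℝ) :
    negCoord i (negCoord j x) = negCoord j (negCoord i x) := by
  funext l; simp [negCoord]; split_ifs <;> simp

lemma swapCoord_fst (i j : Fin n) (x : Fin n → ℝ) : swapCoord i j x i = x j := by
  simp [swapCoord]

lemma swapNegCoord_fst (i j : Fin n) (x : Fin n → ℝ) : swapNegCoord i j x i = -x j := by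
  simp [swapNegCoord]

lemma swapCoord_other (i j l : Fin n) (x : Fin n → ℝ) (h1 : l ≠ i) (h2 : l ≠ j) :
    swapCoord i j x l = x l := by simp [swapCoord, h1, h2]

lemma swapNegCoord_other (i j l : Fin n) (x : Fin n → ℝ) (h1 : l ≠ i) (h2 : l ≠ j) :
    swapNegCoord i j x l = x l := by simp [swapNegCoord, h1, h2]

lemma swapCoord_negCoord (i j m : Fin n) (x : Fin n → ℝ) (hi : i ≠ m) (hj : j ≠ m) :
    swapCoord i j (negCoord m x) = negCoord m (swapCoord i j x) := by
  funext l; simp only [swapCoord, negCoord]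
  split_ifs <;> simp_all

lemma swapNegCoord_negCoord (i j m : Fin n) (x : Fin n → ℝ) (hi : i ≠ m) (hj : j ≠ m) :
    swapNegCoord i j (negCoord m x) = negCoord m (swapNegCoord i j x) := by
  funext l; simp only [swapNegCoord, negCoord]
  split_ifs <;> simp_all

lemma negCoord_swapCoord (i j : Fin n) (x : Fin n → ℝ) (hij : j ≠ i) :
    negCoord i (swapCoord i j x) = swapNegCoord i j (negCoord i x) := by
  funext l; simp only [swapCoord, negCoord, swapNegCoord]
  split_ifs <;> simp_all

lemma negCoord_swapNegCoord (i j : Fin n) (x : Fin n → ℝ) (hij : j ≠ i) :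
    negCoord i (swapNegCoord i j x) = swapCoord i j (negCoord i x) := by
  funext l; simp only [swapCoord, negCoord, swapNegCoord]
  split_ifs <;> simp_all

lemma isRegularBC_negCoord (i : Fin n) (x : Fin n → ℝ) (hx : IsRegularBC x) :
    IsRegularBC (negCoord i x) := by
  obtain ⟨h1, h2⟩ := hx
  constructor
  · intro l; simp only [negCoord]; split_ifs <;> simpa using h1 l
  · intro p q hpq
    have h := h2 p q hpq
    simp only [negCoord]
    split_ifs <;>
      refine ⟨fun hc => ?_, fun hc => ?_⟩ <;>
      first
        | exact h.1 (by linarith)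
        | exact h.2 (by linarith)

lemma one_sub_exp_ne_zero {t : ℝ} (ht : t ≠ 0) : (1 : ℂ) - Complex.exp (t : ℂ) ≠ 0 := by
  rw [sub_ne_zero]
  intro h
  have h2 : Real.exp t = 1 := by
    have := congrArg (‖·‖) h
    simpa [Complex.norm_exp] using this.symm
  exact ht (by rwa [Real.exp_eq_one_iff] at h2)

noncomputable def negCoordCLM (i : Fin n) : (Fin n → ℝ) →L[ℝ] (Fin n → ℝ) :=
  LinearMap.toContinuousLinearMap
    { toFun := negCoord i
      map_add' := by intro x y; funext l; simp only [negCoord, Pi.add_apply]; split_ifs <;> ring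
      map_smul' := by
        intro c x; funext l
        simp only [negCoord, Pi.smul_apply, smul_eq_mul, RingHom.id_apply]
        split_ifs <;> ring }

lemma negCoordCLM_apply (i : Fin n) (x : Fin n → ℝ) : negCoordCLM i x = negCoord i x := rfl

lemma hasFDerivAt_expMul (i : Fin n) (f : (Fin n → ℝ) → ℂ) (hf : Differentiable ℝ f)
    (x : Fin n → ℝ) :
    HasFDerivAt (fun y => Complex.exp ((y i : ℝ) : ℂ) * f (negCoord i y))
      (Complex.exp ((x i : ℝ) : ℂ) •
          ((fderiv ℝ f (negCoord i x)).comp (negCoordCLM i))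
        + f (negCoord i x) •
          (Complex.exp ((x i : ℝ) : ℂ) • (Complex.ofRealCLM.comp (ContinuousLinearMap.proj i)))) x := by
  have h1 : HasFDerivAt (fun y : Fin n → ℝ => ((y i : ℝ) : ℂ))
      (Complex.ofRealCLM.comp (ContinuousLinearMap.proj i)) x := by
    exact (Complex.ofRealCLM.comp (ContinuousLinearMap.proj i)).hasFDerivAt (x := x)
  have h2 : HasFDerivAt (fun y : Fin n → ℝ => Complex.exp ((y i : ℝ) : ℂ))
      (Complex.exp ((x i : ℝ) : ℂ) • (Complex.ofRealCLM.comp (ContinuousLinearMap.proj i))) x :=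
    (Complex.hasDerivAt_exp _).comp_hasFDerivAt x h1
  have h3 : HasFDerivAt (fun y => f (negCoord i y))
      ((fderiv ℝ f (negCoord i x)).comp (negCoordCLM i)) x := by
    have h4 := (negCoordCLM i).hasFDerivAt (x := x)
    have h5 := (hf (negCoord i x)).hasFDerivAt
    exact h5.comp x h4
  exact h2.mul h3

lemma fderiv_expMul_apply (i : Fin n) (f : (Fin n → ℝ) → ℂ) (hf : Differentiable ℝ f)
    (x ξ : Fin n → ℝ) :
    fderiv ℝ (fun y => Complex.exp ((y i : ℝ) : ℂ) * f (negCoord i y)) x ξ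
      = ((ξ i : ℝ) : ℂ) * Complex.exp ((x i : ℝ) : ℂ) * f (negCoord i x)
        + Complex.exp ((x i : ℝ) : ℂ) * fderiv ℝ f (negCoord i x) (negCoord i ξ) := by
  rw [(hasFDerivAt_expMul i f hf x).fderiv]
  simp [negCoordCLM_apply]
  ring

lemma scalar1 (c c' a : ℝ) (F G : ℂ) (ha : a ≠ 0) (hc : c' = -c) :
    ((c : ℝ) : ℂ) * (Complex.exp ((a : ℝ) : ℂ) * F - Complex.exp ((-a : ℝ) : ℂ) * G)
        / (1 - Complex.exp (-((a : ℝ) : ℂ)))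
      = Complex.exp ((a : ℝ) : ℂ) *
          (((c' : ℝ) : ℂ) * (F - G) / (1 - Complex.exp (-((-a : ℝ) : ℂ))))
        + ((c : ℝ) : ℂ) * (Complex.exp ((a : ℝ) : ℂ) * F) + ((c : ℝ) : ℂ) * G := by
  subst hc
  have hE0 : Complex.exp ((a : ℝ) : ℂ) ≠ 0 := Complex.exp_ne_zero _
  have hd2 : 1 - Complex.exp ((a : ℝ) : ℂ) ≠ 0 := one_sub_exp_ne_zero ha
  have h2 : Complex.exp ((a : ℝ) : ℂ) - 1 ≠ 0 := by
    intro h; exact hd2 (by linear_combination -h)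
  push_cast
  rw [neg_neg, Complex.exp_neg]
  rw [show (1 : ℂ) - (Complex.exp ((a : ℝ) : ℂ))⁻¹
      = (Complex.exp ((a : ℝ) : ℂ) - 1) / Complex.exp ((a : ℝ) : ℂ) by field_simp]
  rw [div_div_eq_mul_div, div_eq_iff h2, eq_comm]
  field_simp [h2]
  ring

lemma scalar2 (c c' a : ℝ) (F G : ℂ) (ha : a ≠ 0) (hc : c' = -c) :
    ((c : ℝ) : ℂ) * (Complex.exp ((a : ℝ) : ℂ) * F - Complex.exp ((-a : ℝ) : ℂ) * G)
        / (1 - Complex.exp (-((2 * a : ℝ) : ℂ)))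
      = Complex.exp ((a : ℝ) : ℂ) *
          (((c' : ℝ) : ℂ) * (F - G) / (1 - Complex.exp (-((2 * -a : ℝ) : ℂ))))
        + ((c : ℝ) : ℂ) * (Complex.exp ((a : ℝ) : ℂ) * F) := by
  subst hc
  have hE0 : Complex.exp ((a : ℝ) : ℂ) ≠ 0 := Complex.exp_ne_zero _
  have h2a : a + a ≠ 0 := by intro h; exact ha (by linarith)
  have hd2 : 1 - Complex.exp ((a : ℝ) : ℂ) * Complex.exp ((a : ℝ) : ℂ) ≠ 0 := by
    rw [← Complex.exp_add, ← Complex.ofReal_add]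
    exact one_sub_exp_ne_zero h2a
  have h2 : Complex.exp ((a : ℝ) : ℂ) * Complex.exp ((a : ℝ) : ℂ) - 1 ≠ 0 := by
    intro h; exact hd2 (by linear_combination -h)
  push_cast
  rw [show Complex.exp (-(2 * (a : ℂ))) = (Complex.exp ((a : ℝ) : ℂ) * Complex.exp ((a : ℝ) : ℂ))⁻¹ by
        rw [show -(2 * (a : ℂ)) = -((a : ℂ) + a) by ring, Complex.exp_neg, Complex.exp_add],
      show Complex.exp (-(2 * -(a : ℂ))) = Complex.exp ((a : ℝ) : ℂ) * Complex.exp ((a : ℝ) : ℂ) by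
        rw [show -(2 * -(a : ℂ)) = (a : ℂ) + a by ring, Complex.exp_add],
      Complex.exp_neg]
  rw [show (1 : ℂ) - (Complex.exp ((a : ℝ) : ℂ) * Complex.exp ((a : ℝ) : ℂ))⁻¹
      = (Complex.exp ((a : ℝ) : ℂ) * Complex.exp ((a : ℝ) : ℂ) - 1)
        / (Complex.exp ((a : ℝ) : ℂ) * Complex.exp ((a : ℝ) : ℂ)) by field_simp]
  rw [div_div_eq_mul_div, div_eq_iff h2, eq_comm]
  have hd3 : (1 : ℂ) - Complex.exp ((a : ℝ) : ℂ) ^ 2 ≠ 0 := by rw [pow_two]; exact hd2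
  field_simp [h2, hd3]
  ring

lemma scalar3 (k3 ξ1 ξj a b : ℝ) (F P Q : ℂ)
    (hab : a + b ≠ 0) (hab' : a - b ≠ 0) :
    ((k3 * (ξ1 - ξj) : ℝ) : ℂ) * (Complex.exp ((a : ℝ) : ℂ) * F - Complex.exp ((b : ℝ) : ℂ) * P)
        / (1 - Complex.exp (-((a - b : ℝ) : ℂ)))
      + ((k3 * (ξ1 + ξj) : ℝ) : ℂ) * (Complex.exp ((a : ℝ) : ℂ) * F - Complex.exp ((-b : ℝ) : ℂ) * Q)
        / (1 - Complex.exp (-((a + b : ℝ) : ℂ)))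
      = Complex.exp ((a : ℝ) : ℂ) *
          (((k3 * (-ξ1 - ξj) : ℝ) : ℂ) * (F - Q) / (1 - Complex.exp (-((-a - b : ℝ) : ℂ)))
            + ((k3 * (-ξ1 + ξj) : ℝ) : ℂ) * (F - P) / (1 - Complex.exp (-((-a + b : ℝ) : ℂ))))
        + ((2 * (k3 * ξ1) : ℝ) : ℂ) * (Complex.exp ((a : ℝ) : ℂ) * F) := by
  have hEa : Complex.exp ((a : ℝ) : ℂ) ≠ 0 := Complex.exp_ne_zero _
  have hEb : Complex.exp ((b : ℝ) : ℂ) ≠ 0 := Complex.exp_ne_zero _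
  have d3 : 1 - Complex.exp ((a : ℝ) : ℂ) * Complex.exp ((b : ℝ) : ℂ) ≠ 0 := by
    rw [← Complex.exp_add, ← Complex.ofReal_add]
    exact one_sub_exp_ne_zero hab
  have d4 : 1 - Complex.exp ((a : ℝ) : ℂ) / Complex.exp ((b : ℝ) : ℂ) ≠ 0 := by
    rw [← Complex.exp_sub, ← Complex.ofReal_sub]
    exact one_sub_exp_ne_zero hab'
  have hne : Complex.exp ((a : ℝ) : ℂ) ≠ Complex.exp ((b : ℝ) : ℂ) := by
    intro h; apply d4; rw [h, div_self hEb]; ring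
  have e1 : Complex.exp ((a : ℝ) : ℂ) - Complex.exp ((b : ℝ) : ℂ) ≠ 0 := sub_ne_zero.mpr hne
  have e2 : Complex.exp ((b : ℝ) : ℂ) - Complex.exp ((a : ℝ) : ℂ) ≠ 0 := by
    intro h; exact e1 (by linear_combination -h)
  have e3 : Complex.exp ((a : ℝ) : ℂ) * Complex.exp ((b : ℝ) : ℂ) - 1 ≠ 0 := by
    intro h; exact d3 (by linear_combination -h)
  push_cast
  rw [show Complex.exp (-((a : ℂ) - b)) = Complex.exp ((b : ℝ) : ℂ) / Complex.exp ((a : ℝ) : ℂ) by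
        rw [show -((a : ℂ) - b) = (b : ℂ) - a by ring, Complex.exp_sub],
      show Complex.exp (-((a : ℂ) + b)) = (Complex.exp ((a : ℝ) : ℂ) * Complex.exp ((b : ℝ) : ℂ))⁻¹ by
        rw [Complex.exp_neg, Complex.exp_add],
      show Complex.exp (-(-(a : ℂ) - b)) = Complex.exp ((a : ℝ) : ℂ) * Complex.exp ((b : ℝ) : ℂ) by
        rw [show -(-(a : ℂ) - b) = (a : ℂ) + b by ring, Complex.exp_add],
      show Complex.exp (-(-(a : ℂ) + b)) = Complex.exp ((a : ℝ) : ℂ) / Complex.exp ((b : ℝ) : ℂ) by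
        rw [show -(-(a : ℂ) + b) = (a : ℂ) - b by ring, Complex.exp_sub],
      show Complex.exp (-(b : ℂ)) = (Complex.exp ((b : ℝ) : ℂ))⁻¹ from Complex.exp_neg _]
  rw [show (1 : ℂ) - Complex.exp ((b : ℝ) : ℂ) / Complex.exp ((a : ℝ) : ℂ)
        = (Complex.exp ((a : ℝ) : ℂ) - Complex.exp ((b : ℝ) : ℂ)) / Complex.exp ((a : ℝ) : ℂ) by
        field_simp,
      show (1 : ℂ) - (Complex.exp ((a : ℝ) : ℂ) * Complex.exp ((b : ℝ) : ℂ))⁻¹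
        = (Complex.exp ((a : ℝ) : ℂ) * Complex.exp ((b : ℝ) : ℂ) - 1)
          / (Complex.exp ((a : ℝ) : ℂ) * Complex.exp ((b : ℝ) : ℂ)) by field_simp,
      show (1 : ℂ) - Complex.exp ((a : ℝ) : ℂ) / Complex.exp ((b : ℝ) : ℂ)
        = (Complex.exp ((b : ℝ) : ℂ) - Complex.exp ((a : ℝ) : ℂ)) / Complex.exp ((b : ℝ) : ℂ) by
        field_simp]
  rw [div_div_eq_mul_div, div_div_eq_mul_div, div_div_eq_mul_div]
  field_simp [e1, e2, e3, d3]
  ring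

lemma cherednikBC_add_const_mul (k1 k2 k3 : ℝ) (ξ : Fin n → ℝ)
    (h f : (Fin n → ℝ) → ℂ) (c : ℂ) (x : Fin n → ℝ)
    (hh : DifferentiableAt ℝ h x) (hfd : DifferentiableAt ℝ f x) :
    cherednikBC k1 k2 k3 ξ (fun y => h y + c * f y) x
      = cherednikBC k1 k2 k3 ξ h x + c * cherednikBC k1 k2 k3 ξ f x := by
  have hg : fderiv ℝ (fun y => h y + c * f y) x ξ
      = fderiv ℝ h x ξ + c * fderiv ℝ f x ξ := by
    rw [HasFDerivAt.fderiv (f := fun y => h y + c * f y) (hh.hasFDerivAt.add ((hfd.hasFDerivAt).const_mul c))]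
    simp
  simp only [cherednikBC, hg]
  have s1 : ∑ i, ((k1 * ξ i : ℝ) : ℂ) * ((h x + c * f x) - (h (negCoord i x) + c * f (negCoord i x)))
        / (1 - Complex.exp (-((x i : ℝ) : ℂ)))
      = (∑ i, ((k1 * ξ i : ℝ) : ℂ) * (h x - h (negCoord i x)) / (1 - Complex.exp (-((x i : ℝ) : ℂ))))
        + c * ∑ i, ((k1 * ξ i : ℝ) : ℂ) * (f x - f (negCoord i x)) / (1 - Complex.exp (-((x i : ℝ) : ℂ))) := by
    rw [Finset.mul_sum, ← Finset.sum_add_distrib]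
    exact Finset.sum_congr rfl (fun i _ => by ring)
  have s2 : ∑ i, ((k2 * (2 * ξ i) : ℝ) : ℂ) * ((h x + c * f x) - (h (negCoord i x) + c * f (negCoord i x)))
        / (1 - Complex.exp (-((2 * x i : ℝ) : ℂ)))
      = (∑ i, ((k2 * (2 * ξ i) : ℝ) : ℂ) * (h x - h (negCoord i x)) / (1 - Complex.exp (-((2 * x i : ℝ) : ℂ))))
        + c * ∑ i, ((k2 * (2 * ξ i) : ℝ) : ℂ) * (f x - f (negCoord i x)) / (1 - Complex.exp (-((2 * x i : ℝ) : ℂ))) := by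
    rw [Finset.mul_sum, ← Finset.sum_add_distrib]
    exact Finset.sum_congr rfl (fun i _ => by ring)
  have s3 : ∑ i, ∑ j, (if i < j then
        ((k3 * (ξ i - ξ j) : ℝ) : ℂ) * ((h x + c * f x) - (h (swapCoord i j x) + c * f (swapCoord i j x)))
          / (1 - Complex.exp (-((x i - x j : ℝ) : ℂ)))
        + ((k3 * (ξ i + ξ j) : ℝ) : ℂ) * ((h x + c * f x) - (h (swapNegCoord i j x) + c * f (swapNegCoord i j x)))
          / (1 - Complex.exp (-((x i + x j : ℝ) : ℂ)))
      else 0)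
      = (∑ i, ∑ j, (if i < j then
          ((k3 * (ξ i - ξ j) : ℝ) : ℂ) * (h x - h (swapCoord i j x)) / (1 - Complex.exp (-((x i - x j : ℝ) : ℂ)))
          + ((k3 * (ξ i + ξ j) : ℝ) : ℂ) * (h x - h (swapNegCoord i j x)) / (1 - Complex.exp (-((x i + x j : ℝ) : ℂ)))
        else 0))
        + c * ∑ i, ∑ j, (if i < j then
          ((k3 * (ξ i - ξ j) : ℝ) : ℂ) * (f x - f (swapCoord i j x)) / (1 - Complex.exp (-((x i - x j : ℝ) : ℂ)))
          + ((k3 * (ξ i + ξ j) : ℝ) : ℂ) * (f x - f (swapNegCoord i j x)) / (1 - Complex.exp (-((x i + x j : ℝ) : ℂ)))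
        else 0) := by
    rw [Finset.mul_sum, ← Finset.sum_add_distrib]
    refine Finset.sum_congr rfl (fun i _ => ?_)
    rw [Finset.mul_sum, ← Finset.sum_add_distrib]
    refine Finset.sum_congr rfl (fun j _ => ?_)
    split_ifs with hij
    · ring
    · ring
  rw [s1, s2, s3]
  ring

end Aux
lemma cherednikBC_expMul_eq {n : ℕ} (k1 k2 k3 : ℝ) (f : (Fin n → ℝ) → ℂ)
    (hf : Differentiable ℝ f) (i₀ : Fin n) (hi₀ : (i₀ : ℕ) = 0)
    (ξ x : Fin n → ℝ) (hx : IsRegularBC x) :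
    cherednikBC k1 k2 k3 ξ (fun y => Complex.exp ((y i₀ : ℝ) : ℂ) * f (negCoord i₀ y)) x
      = Complex.exp ((x i₀ : ℝ) : ℂ) * cherednikBC k1 k2 k3 (negCoord i₀ ξ) f (negCoord i₀ x)
        + ((ξ i₀ : ℝ) : ℂ) * (Complex.exp ((x i₀ : ℝ) : ℂ) * f (negCoord i₀ x))
        + ((k1 * ξ i₀ : ℝ) : ℂ) * f x := by
  have hmin : ∀ j : Fin n, j ≠ i₀ → i₀ < j := by
    intro j hj
    rw [Fin.lt_def, hi₀]
    exact Nat.pos_of_ne_zero (fun hc => hj (Fin.ext (by rw [hc, hi₀])))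
  have hn1 : 1 ≤ n := by
    have := i₀.isLt
    omega
  have hx0 : x i₀ ≠ 0 := hx.1 i₀
  have hpm : ∀ j : Fin n, j ≠ i₀ → x i₀ + x j ≠ 0 ∧ x i₀ - x j ≠ 0 :=
    fun j hj => hx.2 i₀ j (hmin j hj)
  simp only [cherednikBC]
  rw [fderiv_expMul_apply i₀ f hf x ξ]
  -- ρ identity
  have hrho : (∑ i, rhoBC k1 k2 k3 i * ξ i)
      = (∑ i, rhoBC k1 k2 k3 i * negCoord i₀ ξ i)
        + (k1 + 2 * k2 + 2 * k3 * ((n : ℝ) - 1)) * ξ i₀ := by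
    conv_lhs => rw [← Finset.sum_erase_add Finset.univ _ (Finset.mem_univ i₀)]
    conv_rhs => rw [← Finset.sum_erase_add Finset.univ _ (Finset.mem_univ i₀)]
    have hsum : ∑ i ∈ Finset.univ.erase i₀, rhoBC k1 k2 k3 i * ξ i
        = ∑ i ∈ Finset.univ.erase i₀, rhoBC k1 k2 k3 i * negCoord i₀ ξ i :=
      Finset.sum_congr rfl fun i hi => by
        rw [negCoord_ne i₀ i ξ (Finset.mem_erase.mp hi).1]
    rw [hsum, negCoord_self i₀ ξ]
    simp only [rhoBC, hi₀]
    push_cast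
    ring
  -- first reflection sum
  have hS1 : (∑ i, ((k1 * ξ i : ℝ) : ℂ) *
        (Complex.exp ((x i₀ : ℝ) : ℂ) * f (negCoord i₀ x)
          - Complex.exp ((negCoord i x i₀ : ℝ) : ℂ) * f (negCoord i₀ (negCoord i x)))
        / (1 - Complex.exp (-((x i : ℝ) : ℂ))))
      = Complex.exp ((x i₀ : ℝ) : ℂ) *
          (∑ i, ((k1 * negCoord i₀ ξ i : ℝ) : ℂ) *
            (f (negCoord i₀ x) - f (negCoord i (negCoord i₀ x)))
            / (1 - Complex.exp (-((negCoord i₀ x i : ℝ) : ℂ))))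
        + (((k1 * ξ i₀ : ℝ) : ℂ) * (Complex.exp ((x i₀ : ℝ) : ℂ) * f (negCoord i₀ x))
          + ((k1 * ξ i₀ : ℝ) : ℂ) * f x) := by
    conv_rhs => rw [Finset.mul_sum]
    conv_lhs => rw [← Finset.sum_erase_add Finset.univ _ (Finset.mem_univ i₀)]
    conv_rhs => rw [← Finset.sum_erase_add Finset.univ _ (Finset.mem_univ i₀)]
    have hsum : ∑ i ∈ Finset.univ.erase i₀, ((k1 * ξ i : ℝ) : ℂ) *
          (Complex.exp ((x i₀ : ℝ) : ℂ) * f (negCoord i₀ x)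
            - Complex.exp ((negCoord i x i₀ : ℝ) : ℂ) * f (negCoord i₀ (negCoord i x)))
          / (1 - Complex.exp (-((x i : ℝ) : ℂ)))
        = ∑ i ∈ Finset.univ.erase i₀, Complex.exp ((x i₀ : ℝ) : ℂ) *
          (((k1 * negCoord i₀ ξ i : ℝ) : ℂ) *
            (f (negCoord i₀ x) - f (negCoord i (negCoord i₀ x)))
            / (1 - Complex.exp (-((negCoord i₀ x i : ℝ) : ℂ)))) := by
      refine Finset.sum_congr rfl fun i hi => ?_
      have hii : i ≠ i₀ := (Finset.mem_erase.mp hi).1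
      rw [negCoord_ne i i₀ x (Ne.symm hii), negCoord_comm i₀ i x,
        negCoord_ne i₀ i ξ hii, negCoord_ne i₀ i x hii]
      ring
    have hI : ((k1 * ξ i₀ : ℝ) : ℂ) *
          (Complex.exp ((x i₀ : ℝ) : ℂ) * f (negCoord i₀ x)
            - Complex.exp ((negCoord i₀ x i₀ : ℝ) : ℂ) * f (negCoord i₀ (negCoord i₀ x)))
          / (1 - Complex.exp (-((x i₀ : ℝ) : ℂ)))
        = Complex.exp ((x i₀ : ℝ) : ℂ) *
            (((k1 * negCoord i₀ ξ i₀ : ℝ) : ℂ) *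
              (f (negCoord i₀ x) - f (negCoord i₀ (negCoord i₀ x)))
              / (1 - Complex.exp (-((negCoord i₀ x i₀ : ℝ) : ℂ))))
          + (((k1 * ξ i₀ : ℝ) : ℂ) * (Complex.exp ((x i₀ : ℝ) : ℂ) * f (negCoord i₀ x))
            + ((k1 * ξ i₀ : ℝ) : ℂ) * f x) := by
      rw [negCoord_negCoord i₀ x, negCoord_self i₀ x, negCoord_self i₀ ξ]
      have := scalar1 (k1 * ξ i₀) (k1 * -ξ i₀) (x i₀) (f (negCoord i₀ x)) (f x) hx0 (by ring)
      linear_combination this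
    linear_combination hsum + hI
  -- second reflection sum
  have hS2 : (∑ i, ((k2 * (2 * ξ i) : ℝ) : ℂ) *
        (Complex.exp ((x i₀ : ℝ) : ℂ) * f (negCoord i₀ x)
          - Complex.exp ((negCoord i x i₀ : ℝ) : ℂ) * f (negCoord i₀ (negCoord i x)))
        / (1 - Complex.exp (-((2 * x i : ℝ) : ℂ))))
      = Complex.exp ((x i₀ : ℝ) : ℂ) *
          (∑ i, ((k2 * (2 * negCoord i₀ ξ i) : ℝ) : ℂ) *
            (f (negCoord i₀ x) - f (negCoord i (negCoord i₀ x)))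
            / (1 - Complex.exp (-((2 * negCoord i₀ x i : ℝ) : ℂ))))
        + ((k2 * (2 * ξ i₀) : ℝ) : ℂ) * (Complex.exp ((x i₀ : ℝ) : ℂ) * f (negCoord i₀ x)) := by
    conv_rhs => rw [Finset.mul_sum]
    conv_lhs => rw [← Finset.sum_erase_add Finset.univ _ (Finset.mem_univ i₀)]
    conv_rhs => rw [← Finset.sum_erase_add Finset.univ _ (Finset.mem_univ i₀)]
    have hsum : ∑ i ∈ Finset.univ.erase i₀, ((k2 * (2 * ξ i) : ℝ) : ℂ) *
          (Complex.exp ((x i₀ : ℝ) : ℂ) * f (negCoord i₀ x)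
            - Complex.exp ((negCoord i x i₀ : ℝ) : ℂ) * f (negCoord i₀ (negCoord i x)))
          / (1 - Complex.exp (-((2 * x i : ℝ) : ℂ)))
        = ∑ i ∈ Finset.univ.erase i₀, Complex.exp ((x i₀ : ℝ) : ℂ) *
          (((k2 * (2 * negCoord i₀ ξ i) : ℝ) : ℂ) *
            (f (negCoord i₀ x) - f (negCoord i (negCoord i₀ x)))
            / (1 - Complex.exp (-((2 * negCoord i₀ x i : ℝ) : ℂ)))) := by
      refine Finset.sum_congr rfl fun i hi => ?_
      have hii : i ≠ i₀ := (Finset.mem_erase.mp hi).1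
      rw [negCoord_ne i i₀ x (Ne.symm hii), negCoord_comm i₀ i x,
        negCoord_ne i₀ i ξ hii, negCoord_ne i₀ i x hii]
      ring
    have hI : ((k2 * (2 * ξ i₀) : ℝ) : ℂ) *
          (Complex.exp ((x i₀ : ℝ) : ℂ) * f (negCoord i₀ x)
            - Complex.exp ((negCoord i₀ x i₀ : ℝ) : ℂ) * f (negCoord i₀ (negCoord i₀ x)))
          / (1 - Complex.exp (-((2 * x i₀ : ℝ) : ℂ)))
        = Complex.exp ((x i₀ : ℝ) : ℂ) *
            (((k2 * (2 * negCoord i₀ ξ i₀) : ℝ) : ℂ) *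
              (f (negCoord i₀ x) - f (negCoord i₀ (negCoord i₀ x)))
              / (1 - Complex.exp (-((2 * negCoord i₀ x i₀ : ℝ) : ℂ))))
          + ((k2 * (2 * ξ i₀) : ℝ) : ℂ) * (Complex.exp ((x i₀ : ℝ) : ℂ) * f (negCoord i₀ x)) := by
      rw [negCoord_negCoord i₀ x, negCoord_self i₀ x, negCoord_self i₀ ξ]
      have := scalar2 (k2 * (2 * ξ i₀)) (k2 * (2 * -ξ i₀)) (x i₀)
        (f (negCoord i₀ x)) (f x) hx0 (by ring)
      linear_combination this
    linear_combination hsum + hI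
  -- double sum
  have hS3 : (∑ i, ∑ j, (if i < j then
        ((k3 * (ξ i - ξ j) : ℝ) : ℂ) *
          (Complex.exp ((x i₀ : ℝ) : ℂ) * f (negCoord i₀ x)
            - Complex.exp ((swapCoord i j x i₀ : ℝ) : ℂ) * f (negCoord i₀ (swapCoord i j x)))
          / (1 - Complex.exp (-((x i - x j : ℝ) : ℂ)))
        + ((k3 * (ξ i + ξ j) : ℝ) : ℂ) *
          (Complex.exp ((x i₀ : ℝ) : ℂ) * f (negCoord i₀ x)
            - Complex.exp ((swapNegCoord i j x i₀ : ℝ) : ℂ) * f (negCoord i₀ (swapNegCoord i j x)))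
          / (1 - Complex.exp (-((x i + x j : ℝ) : ℂ)))
      else 0))
      = Complex.exp ((x i₀ : ℝ) : ℂ) *
          (∑ i, ∑ j, (if i < j then
            ((k3 * (negCoord i₀ ξ i - negCoord i₀ ξ j) : ℝ) : ℂ) *
              (f (negCoord i₀ x) - f (swapCoord i j (negCoord i₀ x)))
              / (1 - Complex.exp (-((negCoord i₀ x i - negCoord i₀ x j : ℝ) : ℂ)))
            + ((k3 * (negCoord i₀ ξ i + negCoord i₀ ξ j) : ℝ) : ℂ) *
              (f (negCoord i₀ x) - f (swapNegCoord i j (negCoord i₀ x)))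
              / (1 - Complex.exp (-((negCoord i₀ x i + negCoord i₀ x j : ℝ) : ℂ)))
          else 0))
        + ((n : ℂ) - 1) * (((2 * (k3 * ξ i₀) : ℝ) : ℂ) *
            (Complex.exp ((x i₀ : ℝ) : ℂ) * f (negCoord i₀ x))) := by
    conv_rhs => rw [Finset.mul_sum]
    conv_lhs => rw [← Finset.sum_erase_add Finset.univ _ (Finset.mem_univ i₀)]
    conv_rhs => rw [← Finset.sum_erase_add Finset.univ _ (Finset.mem_univ i₀)]
    have hsum : ∑ i ∈ Finset.univ.erase i₀, (∑ j, (if i < j then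
          ((k3 * (ξ i - ξ j) : ℝ) : ℂ) *
            (Complex.exp ((x i₀ : ℝ) : ℂ) * f (negCoord i₀ x)
              - Complex.exp ((swapCoord i j x i₀ : ℝ) : ℂ) * f (negCoord i₀ (swapCoord i j x)))
            / (1 - Complex.exp (-((x i - x j : ℝ) : ℂ)))
          + ((k3 * (ξ i + ξ j) : ℝ) : ℂ) *
            (Complex.exp ((x i₀ : ℝ) : ℂ) * f (negCoord i₀ x)
              - Complex.exp ((swapNegCoord i j x i₀ : ℝ) : ℂ) * f (negCoord i₀ (swapNegCoord i j x)))
            / (1 - Complex.exp (-((x i + x j : ℝ) : ℂ)))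
        else 0))
        = ∑ i ∈ Finset.univ.erase i₀, Complex.exp ((x i₀ : ℝ) : ℂ) *
            (∑ j, (if i < j then
            ((k3 * (negCoord i₀ ξ i - negCoord i₀ ξ j) : ℝ) : ℂ) *
              (f (negCoord i₀ x) - f (swapCoord i j (negCoord i₀ x)))
              / (1 - Complex.exp (-((negCoord i₀ x i - negCoord i₀ x j : ℝ) : ℂ)))
            + ((k3 * (negCoord i₀ ξ i + negCoord i₀ ξ j) : ℝ) : ℂ) *
              (f (negCoord i₀ x) - f (swapNegCoord i j (negCoord i₀ x)))
              / (1 - Complex.exp (-((negCoord i₀ x i + negCoord i₀ x j : ℝ) : ℂ)))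
          else 0)) := by
      refine Finset.sum_congr rfl fun i hi => ?_
      have hii : i ≠ i₀ := (Finset.mem_erase.mp hi).1
      rw [Finset.mul_sum]
      refine Finset.sum_congr rfl fun j _ => ?_
      by_cases hij : i < j
      · rw [if_pos hij, if_pos hij]
        have hji : j ≠ i₀ := (lt_trans (hmin i hii) hij).ne'
        rw [swapCoord_other i j i₀ x (Ne.symm hii) (Ne.symm hji),
          swapNegCoord_other i j i₀ x (Ne.symm hii) (Ne.symm hji),
          ← swapCoord_negCoord i j i₀ x hii hji,
          ← swapNegCoord_negCoord i j i₀ x hii hji,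
          negCoord_ne i₀ i ξ hii, negCoord_ne i₀ j ξ hji,
          negCoord_ne i₀ i x hii, negCoord_ne i₀ j x hji]
        ring
      · rw [if_neg hij, if_neg hij]
        ring
    have hrow : (∑ j, (if i₀ < j then
          ((k3 * (ξ i₀ - ξ j) : ℝ) : ℂ) *
            (Complex.exp ((x i₀ : ℝ) : ℂ) * f (negCoord i₀ x)
              - Complex.exp ((swapCoord i₀ j x i₀ : ℝ) : ℂ) * f (negCoord i₀ (swapCoord i₀ j x)))
            / (1 - Complex.exp (-((x i₀ - x j : ℝ) : ℂ)))
          + ((k3 * (ξ i₀ + ξ j) : ℝ) : ℂ) *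
            (Complex.exp ((x i₀ : ℝ) : ℂ) * f (negCoord i₀ x)
              - Complex.exp ((swapNegCoord i₀ j x i₀ : ℝ) : ℂ) * f (negCoord i₀ (swapNegCoord i₀ j x)))
            / (1 - Complex.exp (-((x i₀ + x j : ℝ) : ℂ)))
        else 0))
        = Complex.exp ((x i₀ : ℝ) : ℂ) *
            (∑ j, (if i₀ < j then
            ((k3 * (negCoord i₀ ξ i₀ - negCoord i₀ ξ j) : ℝ) : ℂ) *
              (f (negCoord i₀ x) - f (swapCoord i₀ j (negCoord i₀ x)))
              / (1 - Complex.exp (-((negCoord i₀ x i₀ - negCoord i₀ x j : ℝ) : ℂ)))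
            + ((k3 * (negCoord i₀ ξ i₀ + negCoord i₀ ξ j) : ℝ) : ℂ) *
              (f (negCoord i₀ x) - f (swapNegCoord i₀ j (negCoord i₀ x)))
              / (1 - Complex.exp (-((negCoord i₀ x i₀ + negCoord i₀ x j : ℝ) : ℂ)))
          else 0))
          + ((n : ℂ) - 1) * (((2 * (k3 * ξ i₀) : ℝ) : ℂ) *
              (Complex.exp ((x i₀ : ℝ) : ℂ) * f (negCoord i₀ x))) := by
      conv_rhs => rw [Finset.mul_sum]
      have hterm : ∀ j ∈ Finset.univ, (if i₀ < j then
            ((k3 * (ξ i₀ - ξ j) : ℝ) : ℂ) *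
              (Complex.exp ((x i₀ : ℝ) : ℂ) * f (negCoord i₀ x)
                - Complex.exp ((swapCoord i₀ j x i₀ : ℝ) : ℂ) * f (negCoord i₀ (swapCoord i₀ j x)))
              / (1 - Complex.exp (-((x i₀ - x j : ℝ) : ℂ)))
            + ((k3 * (ξ i₀ + ξ j) : ℝ) : ℂ) *
              (Complex.exp ((x i₀ : ℝ) : ℂ) * f (negCoord i₀ x)
                - Complex.exp ((swapNegCoord i₀ j x i₀ : ℝ) : ℂ) * f (negCoord i₀ (swapNegCoord i₀ j x)))
              / (1 - Complex.exp (-((x i₀ + x j : ℝ) : ℂ)))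
          else 0)
          = Complex.exp ((x i₀ : ℝ) : ℂ) * (if i₀ < j then
            ((k3 * (negCoord i₀ ξ i₀ - negCoord i₀ ξ j) : ℝ) : ℂ) *
              (f (negCoord i₀ x) - f (swapCoord i₀ j (negCoord i₀ x)))
              / (1 - Complex.exp (-((negCoord i₀ x i₀ - negCoord i₀ x j : ℝ) : ℂ)))
            + ((k3 * (negCoord i₀ ξ i₀ + negCoord i₀ ξ j) : ℝ) : ℂ) *
              (f (negCoord i₀ x) - f (swapNegCoord i₀ j (negCoord i₀ x)))
              / (1 - Complex.exp (-((negCoord i₀ x i₀ + negCoord i₀ x j : ℝ) : ℂ)))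
          else 0)
          + (if i₀ < j then ((2 * (k3 * ξ i₀) : ℝ) : ℂ) *
              (Complex.exp ((x i₀ : ℝ) : ℂ) * f (negCoord i₀ x)) else 0) := by
        intro j _
        by_cases hij : i₀ < j
        · rw [if_pos hij, if_pos hij, if_pos hij]
          have hji : j ≠ i₀ := hij.ne'
          rw [swapCoord_fst, swapNegCoord_fst,
            negCoord_swapCoord i₀ j x hji, negCoord_swapNegCoord i₀ j x hji,
            negCoord_self i₀ x, negCoord_self i₀ ξ,
            negCoord_ne i₀ j ξ hji, negCoord_ne i₀ j x hji]
          have := scalar3 k3 (ξ i₀) (ξ j) (x i₀) (x j) (f (negCoord i₀ x))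
            (f (swapNegCoord i₀ j (negCoord i₀ x))) (f (swapCoord i₀ j (negCoord i₀ x)))
            (hpm j hji).1 (hpm j hji).2
          linear_combination this
        · rw [if_neg hij, if_neg hij, if_neg hij]
          ring
      rw [Finset.sum_congr rfl hterm, Finset.sum_add_distrib]
      congr 1
      rw [Finset.sum_ite, Finset.sum_const_zero, add_zero, Finset.sum_const]
      have hfil : Finset.univ.filter (fun j => i₀ < j) = Finset.univ.erase i₀ := by
        ext j
        simp [Finset.mem_erase, Fin.lt_def, hi₀, Fin.ext_iff, Nat.pos_iff_ne_zero]
      rw [hfil, Finset.card_erase_of_mem (Finset.mem_univ i₀), Finset.card_univ,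
        Fintype.card_fin, nsmul_eq_mul]
      rw [Nat.cast_sub hn1]
      push_cast
      ring
    linear_combination hsum + hrow
  rw [hS1, hS2, hS3, hrho]
  push_cast
  ring

/-- Affine recurrence for eigenfunctions of the type-`BC_n` Cherednik
operators at `β = e₁`: if `D_ξ f = ⟨λ,ξ⟩ f` and `2λ₁ ≠ 1`, then
`g(x) = e^{x₁} f(s_β x) + (k₁/(1−2λ₁)) f(x)` satisfies
`D_ξ g = ⟨β + s_β λ, ξ⟩ g` with `β + s_β λ = (1−λ₁, λ₂, …, λ_n)`. -/
theorem cherednikBC_affine_eigen_recurrence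
    {n : ℕ} (hn : 0 < n) (k1 k2 k3 : ℝ)
    (hk1 : 0 ≤ k1) (hk2 : 0 ≤ k2) (hk3 : 0 ≤ k3)
    (lam : Fin n → ℂ) (hlam : 2 * lam ⟨0, hn⟩ ≠ 1)
    (f : (Fin n → ℝ) → ℂ) (hf : ContDiff ℝ 1 f)
    (heig : ∀ (ξ x : Fin n → ℝ), IsRegularBC x →
      cherednikBC k1 k2 k3 ξ f x = (∑ i, lam i * ((ξ i : ℝ) : ℂ)) * f x) :
    ∀ (ξ x : Fin n → ℝ), IsRegularBC x →
      cherednikBC k1 k2 k3 ξ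
          (fun y => Complex.exp ((y ⟨0, hn⟩ : ℝ) : ℂ) * f (negCoord ⟨0, hn⟩ y)
            + ((k1 : ℂ) / (1 - 2 * lam ⟨0, hn⟩)) * f y) x
        = (∑ i, (if i = ⟨0, hn⟩ then 1 - lam ⟨0, hn⟩ else lam i) * ((ξ i : ℝ) : ℂ))
          * (Complex.exp ((x ⟨0, hn⟩ : ℝ) : ℂ) * f (negCoord ⟨0, hn⟩ x)
            + ((k1 : ℂ) / (1 - 2 * lam ⟨0, hn⟩)) * f x) := by
  intro ξ x hx
  have hfd : Differentiable ℝ f := hf.differentiable one_ne_zero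
  have hc0 : (1 : ℂ) - 2 * lam ⟨0, hn⟩ ≠ 0 := sub_ne_zero.mpr (Ne.symm hlam)
  have hh : DifferentiableAt ℝ
      (fun y => Complex.exp ((y (⟨0, hn⟩ : Fin n) : ℝ) : ℂ) * f (negCoord ⟨0, hn⟩ y)) x :=
    (hasFDerivAt_expMul ⟨0, hn⟩ f hfd x).differentiableAt
  have lin := cherednikBC_add_const_mul k1 k2 k3 ξ
    (fun y => Complex.exp ((y (⟨0, hn⟩ : Fin n) : ℝ) : ℂ) * f (negCoord ⟨0, hn⟩ y)) f
    ((k1 : ℂ) / (1 - 2 * lam ⟨0, hn⟩)) x hh (hfd x)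
  rw [lin]
  rw [cherednikBC_expMul_eq k1 k2 k3 f hfd ⟨0, hn⟩ rfl ξ x hx]
  rw [heig ξ x hx,
    heig (negCoord ⟨0, hn⟩ ξ) (negCoord ⟨0, hn⟩ x) (isRegularBC_negCoord ⟨0, hn⟩ x hx)]
  have A1 : ∑ i, lam i * ((negCoord (⟨0, hn⟩ : Fin n) ξ i : ℝ) : ℂ)
      = (∑ i, lam i * ((ξ i : ℝ) : ℂ)) - 2 * lam ⟨0, hn⟩ * ((ξ ⟨0, hn⟩ : ℝ) : ℂ) := by
    conv_lhs => rw [← Finset.sum_erase_add Finset.univ _ (Finset.mem_univ (⟨0, hn⟩ : Fin n))]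
    conv_rhs => rw [← Finset.sum_erase_add Finset.univ _ (Finset.mem_univ (⟨0, hn⟩ : Fin n))]
    have hsum : ∑ i ∈ Finset.univ.erase (⟨0, hn⟩ : Fin n),
          lam i * ((negCoord (⟨0, hn⟩ : Fin n) ξ i : ℝ) : ℂ)
        = ∑ i ∈ Finset.univ.erase (⟨0, hn⟩ : Fin n), lam i * ((ξ i : ℝ) : ℂ) :=
      Finset.sum_congr rfl fun i hi => by
        rw [negCoord_ne _ i ξ (Finset.mem_erase.mp hi).1]
    rw [hsum, negCoord_self]
    push_cast
    ring
  have A2 : ∑ i, (if i = (⟨0, hn⟩ : Fin n) then 1 - lam ⟨0, hn⟩ else lam i) * ((ξ i : ℝ) : ℂ)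
      = (∑ i, lam i * ((ξ i : ℝ) : ℂ)) + (1 - 2 * lam ⟨0, hn⟩) * ((ξ ⟨0, hn⟩ : ℝ) : ℂ) := by
    conv_lhs => rw [← Finset.sum_erase_add Finset.univ _ (Finset.mem_univ (⟨0, hn⟩ : Fin n))]
    conv_rhs => rw [← Finset.sum_erase_add Finset.univ _ (Finset.mem_univ (⟨0, hn⟩ : Fin n))]
    have hsum : ∑ i ∈ Finset.univ.erase (⟨0, hn⟩ : Fin n),
          (if i = (⟨0, hn⟩ : Fin n) then 1 - lam ⟨0, hn⟩ else lam i) * ((ξ i : ℝ) : ℂ)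
        = ∑ i ∈ Finset.univ.erase (⟨0, hn⟩ : Fin n), lam i * ((ξ i : ℝ) : ℂ) :=
      Finset.sum_congr rfl fun i hi => by
        rw [if_neg (Finset.mem_erase.mp hi).1]
    rw [hsum, if_pos rfl]
    ring
  rw [A1, A2]
  have hc : ((k1 : ℂ) / (1 - 2 * lam ⟨0, hn⟩)) * (1 - 2 * lam ⟨0, hn⟩) = (k1 : ℂ) :=
    div_mul_cancel₀ _ hc0
  push_cast
  linear_combination (-((ξ (⟨0, hn⟩ : Fin n) : ℝ) : ℂ) * f x) * hc
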